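/- arXiv:math/0308112 — 4 statements merged into one kernel-verified Lean document; each statement's English description precedes it below -/
import Mathlib

section
/- The completion of ℝ² under the metric d(u,v) = inf_φ ∫ (1 + |φ|²)^{-1} ds is compact, and is obtained by adding a single point at infinity; i.e., ℝ² with this metric is precompact. -/
open MeasureTheory

/-- The conformal distance on the plane: infimum over smooth curves `γ` joining `u` to `v`
of the length functional `∫ (1 + |γ|²)⁻¹ ds`. -/
noncomputable def confDist (u v : EuclideanSpace ℝ (Fin 2)) : ℝ :=
  ⨅ γ : {γ : ℝ → EuclideanSpace ℝ (Fin 2) // ContDiff ℝ 1 γ ∧ γ 0 = u ∧ γ 1 = v},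
    ∫ t in (0:ℝ)..1, (1 + ‖γ.1 t‖ ^ 2)⁻¹ * ‖deriv γ.1 t‖

/-!
Near the origin `confDist` is dominated by the Euclidean distance, so a finite Euclidean net of a
large disc takes care of it. On a segment staying outside the disc of radius `m`, Cauchy–Schwarz
against the direction of the segment gives `1 + m² + s² ≤ 2 (1 + ‖x‖²)`, where `s` is the signed
arclength coordinate on the line; since `∫ (1 + m² + s²)⁻¹ ds = π / √(1 + m²)` over the whole
line, such a segment is short for `confDist` however long it is. A point `u` outside the disc of
radius `2m` has a coordinate `u i` with `‖u‖ ≤ 2 |u i|`; for the axis point `p = ±2m eᵢ` on that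
side, both `u` and `p` lie in the half-plane `m ‖p‖ ≤ ⟪x, p⟫`, which avoids the disc of radius `m`.
-/

open Real InnerProductSpace

local notation "ℝ²" => EuclideanSpace ℝ (Fin 2)

lemma confDist_le_integral {u v : ℝ²} (γ : ℝ → ℝ²) (hγ : ContDiff ℝ 1 γ) (h0 : γ 0 = u)
    (h1 : γ 1 = v) : confDist u v ≤ ∫ t in (0:ℝ)..1, (1 + ‖γ t‖ ^ 2)⁻¹ * ‖deriv γ t‖ := by
  unfold confDist
  refine ciInf_le ⟨0, ?_⟩ (⟨γ, hγ, h0, h1⟩ : {γ : ℝ → ℝ² // ContDiff ℝ 1 γ ∧ γ 0 = u ∧ γ 1 = v})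
  rintro _ ⟨γ, rfl⟩
  exact intervalIntegral.integral_nonneg zero_le_one fun t _ => by positivity

lemma continuous_segment_integrand (u v : ℝ²) :
    Continuous fun t : ℝ => (1 + ‖u + t • (v - u)‖ ^ 2)⁻¹ * ‖v - u‖ := by
  refine Continuous.mul (Continuous.inv₀ ?_ fun t => by positivity) continuous_const
  fun_prop

lemma confDist_le_integral_segment (u v : ℝ²) :
    confDist u v ≤ ∫ t in (0:ℝ)..1, (1 + ‖u + t • (v - u)‖ ^ 2)⁻¹ * ‖v - u‖ := by
  have hderiv (t : ℝ) : deriv (fun t : ℝ => u + t • (v - u)) t = v - u := by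
    simpa using (((hasDerivAt_id t).smul_const (v - u)).const_add u).deriv
  simpa only [hderiv] using
    confDist_le_integral (fun t : ℝ => u + t • (v - u)) (by fun_prop) (by simp) (by simp)

lemma confDist_le_dist (u v : ℝ²) : confDist u v ≤ dist u v := by
  calc confDist u v
      ≤ ∫ t in (0:ℝ)..1, (1 + ‖u + t • (v - u)‖ ^ 2)⁻¹ * ‖v - u‖ :=
        confDist_le_integral_segment u v
    _ ≤ ∫ _ in (0:ℝ)..1, ‖v - u‖ := by
        refine intervalIntegral.integral_mono_on zero_le_one
          ((continuous_segment_integrand u v).intervalIntegrable 0 1) intervalIntegrable_const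
          fun t _ => mul_le_of_le_one_left (norm_nonneg _) (inv_le_one_of_one_le₀ ?_)
        linarith [sq_nonneg ‖u + t • (v - u)‖]
    _ = dist u v := by simp [dist_eq_norm']

lemma integral_div_sq_add_sq_le (a b c : ℝ) (hb : 0 < b) :
    ∫ t in (0:ℝ)..1, c / (b ^ 2 + (a + t * c) ^ 2) ≤ π / b := by
  have hderiv (t : ℝ) : HasDerivAt (fun t => arctan ((a + t * c) / b) / b)
      (c / (b ^ 2 + (a + t * c) ^ 2)) t := by
    have hlin : HasDerivAt (fun t : ℝ => (a + t * c) / b) (c / b) t := by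
      simpa using (((hasDerivAt_id t).mul_const c).const_add a).div_const b
    exact (((hasDerivAt_arctan _).comp t hlin).div_const b).congr_deriv (by field_simp)
  have hcont : Continuous fun t : ℝ => c / (b ^ 2 + (a + t * c) ^ 2) :=
    continuous_const.div (by fun_prop) fun t => by positivity
  rw [intervalIntegral.integral_eq_sub_of_hasDerivAt (fun t _ => hderiv t)
    (hcont.intervalIntegrable 0 1), ← sub_div]
  gcongr
  linarith [arctan_lt_pi_div_two ((a + 1 * c) / b), neg_pi_div_two_lt_arctan ((a + 0 * c) / b)]

lemma confDist_le_of_forall_mem_segment_le_norm {u v : ℝ²} {m : ℝ}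
    (h : ∀ x ∈ segment ℝ u v, m ≤ ‖x‖) (hm : 0 ≤ m) :
    confDist u v ≤ 2 * π / √(1 + m ^ 2) := by
  set b := √(1 + m ^ 2)
  have hb : 0 < b := sqrt_pos.2 (by positivity)
  have hb2 : b ^ 2 = 1 + m ^ 2 := sq_sqrt (by positivity)
  set c := ‖v - u‖
  rcases (norm_nonneg (v - u)).eq_or_lt with hc | hc
  · calc confDist u v ≤ dist u v := confDist_le_dist u v
      _ = 0 := by rw [dist_eq_norm', ← hc]
      _ ≤ 2 * π / b := by positivity
  -- `a + t * c` is the coordinate of `u + t • (v - u)` along the unit vector `(v - u) / c`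
  set a := ⟪u, v - u⟫_ℝ / c
  have hpointwise : ∀ t ∈ Set.Icc (0:ℝ) 1,
      (1 + ‖u + t • (v - u)‖ ^ 2)⁻¹ * c ≤ 2 * (c / (b ^ 2 + (a + t * c) ^ 2)) := by
    intro t ht
    set x := u + t • (v - u)
    have hmx : m ≤ ‖x‖ := h x ((segment_eq_image' ℝ u v).symm ▸ ⟨t, ht, rfl⟩)
    have hinner : (a + t * c) * c = ⟪x, v - u⟫_ℝ := by
      simp only [x, inner_add_left, real_inner_smul_left, real_inner_self_eq_norm_sq, a, c]
      field_simp
    have hproj : |a + t * c| ≤ ‖x‖ := by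
      refine le_of_mul_le_mul_right ?_ hc
      rw [← abs_of_pos hc, ← abs_mul, abs_of_pos hc, hinner]
      exact abs_real_inner_le_norm x (v - u)
    have hcomp : b ^ 2 + (a + t * c) ^ 2 ≤ 2 * (1 + ‖x‖ ^ 2) := by
      rw [hb2, ← sq_abs (a + t * c)]
      nlinarith [abs_nonneg (a + t * c)]
    rw [inv_mul_eq_div, mul_div_assoc', div_le_div_iff₀ (by positivity) (by positivity)]
    nlinarith
  calc confDist u v ≤ ∫ t in (0:ℝ)..1, (1 + ‖u + t • (v - u)‖ ^ 2)⁻¹ * c :=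
        confDist_le_integral_segment u v
    _ ≤ ∫ t in (0:ℝ)..1, 2 * (c / (b ^ 2 + (a + t * c) ^ 2)) :=
        intervalIntegral.integral_mono_on zero_le_one
          ((continuous_segment_integrand u v).intervalIntegrable 0 1)
          ((continuous_const.mul (continuous_const.div (by fun_prop)
            fun t => by positivity)).intervalIntegrable 0 1) hpointwise
    _ ≤ 2 * π / b := by
        rw [intervalIntegral.integral_const_mul, mul_div_assoc]
        gcongr
        exact integral_div_sq_add_sq_le a b c hb

lemma le_norm_of_mem_segment {E : Type*} [NormedAddCommGroup E] [InnerProductSpace ℝ E]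
    {u p x : E} {m : ℝ} (hp : m ≤ ‖p‖) (hup : m * ‖p‖ ≤ ⟪u, p⟫_ℝ) (hx : x ∈ segment ℝ u p) :
    m ≤ ‖x‖ := by
  have hconv : Convex ℝ {y : E | m * ‖p‖ ≤ ⟪y, p⟫_ℝ} :=
    convex_halfSpace_ge ⟨fun y z => inner_add_left y z p, fun c y => real_inner_smul_left y p c⟩ _
  have hpp : m * ‖p‖ ≤ ⟪p, p⟫_ℝ := by
    rw [real_inner_self_eq_norm_mul_norm]
    exact mul_le_mul_of_nonneg_right hp (norm_nonneg p)
  have hxp : m * ‖p‖ ≤ ‖x‖ * ‖p‖ := (hconv.segment_subset hup hpp hx).trans (real_inner_le_norm x p)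
  rcases (norm_nonneg p).eq_or_lt with hp0 | hp0
  · linarith [norm_nonneg x]
  · exact le_of_mul_le_mul_right hxp hp0

noncomputable def axisPoints (r : ℝ) : Finset ℝ² :=
  (Finset.univ ×ˢ {r, -r}).image fun p : Fin 2 × ℝ => EuclideanSpace.single p.1 p.2

lemma exists_mem_axisPoints_mul_norm_le_inner (u : ℝ²) {r : ℝ} (hr : 0 ≤ r) :
    ∃ p ∈ axisPoints r, ‖p‖ = r ∧ r * ‖u‖ ≤ 2 * ⟪u, p⟫_ℝ := by
  obtain ⟨i, hi⟩ : ∃ i : Fin 2, ‖u‖ ≤ 2 * |u i| := by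
    have hsq : ‖u‖ ^ 2 = u 0 ^ 2 + u 1 ^ 2 := by
      simp [EuclideanSpace.norm_sq_eq, Fin.sum_univ_two]
    rcases le_total |u 0| |u 1| with h | h
    · exact ⟨1, by nlinarith [sq_abs (u 0), sq_abs (u 1), abs_nonneg (u 0), norm_nonneg u]⟩
    · exact ⟨0, by nlinarith [sq_abs (u 0), sq_abs (u 1), abs_nonneg (u 1), norm_nonneg u]⟩
  set s := if 0 ≤ u i then r else -r
  have hsu : s * u i = r * |u i| := by
    by_cases h : 0 ≤ u i
    · simp [s, h, abs_of_nonneg h]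
    · simp [s, h, abs_of_neg (not_le.1 h)]
  refine ⟨EuclideanSpace.single i s, Finset.mem_image.2 ⟨(i, s), ?_, rfl⟩, ?_, ?_⟩
  · by_cases h : 0 ≤ u i <;> simp [s, h]
  · by_cases h : 0 ≤ u i <;> simp [s, h, hr]
  · rw [EuclideanSpace.inner_single_right, conj_trivial, hsu]
    nlinarith

lemma exists_mem_axisPoints_confDist_lt {m : ℝ} (hm : 0 < m) {u : ℝ²} (hu : 2 * m ≤ ‖u‖) :
    ∃ p ∈ axisPoints (2 * m), confDist u p < 2 * π / m := by
  obtain ⟨p, hp, hpn, hup⟩ := exists_mem_axisPoints_mul_norm_le_inner u (by positivity : 0 ≤ 2 * m)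
  have hsegment : ∀ x ∈ segment ℝ u p, m ≤ ‖x‖ :=
    fun x => le_norm_of_mem_segment (by linarith) (by rw [hpn]; nlinarith)
  refine ⟨p, hp, (confDist_le_of_forall_mem_segment_le_norm hsegment hm.le).trans_lt ?_⟩
  gcongr
  exact lt_sqrt hm.le |>.2 (by linarith)

/-- `ℝ²` with the conformal metric is precompact (totally bounded): for every `ε > 0` there
is a finite `ε`-net for `confDist`.  Hence its completion, obtained by adding a single point
at infinity, is compact. -/
theorem confDist_totallyBounded (ε : ℝ) (hε : 0 < ε) :
    ∃ F : Finset (EuclideanSpace ℝ (Fin 2)),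
      ∀ u : EuclideanSpace ℝ (Fin 2), ∃ v ∈ F, confDist u v < ε := by
  set m := 2 * π / ε
  have hm : 0 < m := by positivity
  obtain ⟨T, -, hTfin, hT⟩ := (isCompact_closedBall (0 : ℝ²) (2 * m)).finite_cover_balls hε
  refine ⟨hTfin.toFinset ∪ axisPoints (2 * m), fun u => ?_⟩
  by_cases hu : ‖u‖ ≤ 2 * m
  · obtain ⟨v, hv, huv⟩ := Set.mem_iUnion₂.1 (hT (mem_closedBall_zero_iff.2 hu))
    exact ⟨v, Finset.mem_union_left _ (hTfin.mem_toFinset.2 hv),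
      (confDist_le_dist u v).trans_lt huv⟩
  · obtain ⟨p, hp, hup⟩ := exists_mem_axisPoints_confDist_lt hm (le_of_not_ge hu)
    exact ⟨p, Finset.mem_union_right _ hp, hup.trans_eq (div_div_cancel₀ (by positivity))⟩
end

section
/- Under the cellular automaton T on the triangular lattice (where the spin at site x keeps its value iff x has two neighbors y₁, y₂ that are not neighbors of each other with σ_{y₁} = σ_{y₂} = σ_x, and flips otherwise), every constant-sign m-loop is stable: if (ζ₀, …, ζ_k = ζ₀) is an m-loop with σ_{ζ₀} = σ_{ζ₁} = ⋯ = σ_{ζ_{k−1}}, then after applying T, every site ζ_i still has the same spin value. -/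
open Classical

/-- Adjacency in the triangular lattice `𝕋`, realized on `ℤ × ℤ`. -/
def triAdj (x y : ℤ × ℤ) : Prop :=
  (y.1 - x.1, y.2 - x.2) ∈
    ({(1,0), (-1,0), (0,1), (0,-1), (1,-1), (-1,1)} : Set (ℤ × ℤ))

/-- One step of the cellular automaton `T`: the spin at `x` keeps its value iff `x` has two
non-adjacent neighbors `y₁ ≠ y₂` with the same spin as `x`; otherwise it flips. -/
noncomputable def Tstep (σ : ℤ × ℤ → ℤ) (x : ℤ × ℤ) : ℤ :=
  if ∃ y₁ y₂ : ℤ × ℤ, y₁ ≠ y₂ ∧ triAdj x y₁ ∧ triAdj x y₂ ∧ ¬ triAdj y₁ y₂ ∧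
      σ y₁ = σ x ∧ σ y₂ = σ x
  then σ x else -σ x

/-- The trajectory of the automaton `T` started from `σ₀`. -/
noncomputable def traj (σ₀ : ℤ × ℤ → ℤ) : ℕ → ℤ × ℤ → ℤ
  | 0 => σ₀
  | n + 1 => Tstep (traj σ₀ n)

/-- The six neighbors of a site of the triangular lattice. -/
def triNbrs (x : ℤ × ℤ) : Finset (ℤ × ℤ) :=
  {(x.1 + 1, x.2), (x.1 - 1, x.2), (x.1, x.2 + 1), (x.1, x.2 - 1),
    (x.1 + 1, x.2 - 1), (x.1 - 1, x.2 + 1)}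

/-- `x` and `y` lie in the same constant-sign cluster of `σ`. -/
def sameCluster (σ : ℤ × ℤ → ℤ) (x y : ℤ × ℤ) : Prop :=
  Relation.ReflTransGen (fun a b => triAdj a b ∧ σ a = σ b) x y

/-- Connectivity within a set of sites `S`. -/
def connIn (S : Set (ℤ × ℤ)) (a b : ℤ × ℤ) : Prop :=
  Relation.ReflTransGen (fun u v => triAdj u v ∧ u ∈ S ∧ v ∈ S) a b


lemma triAdj_symm {x y : ℤ × ℤ} (h : triAdj x y) : triAdj y x := by
  simp only [triAdj, Set.mem_insert_iff, Set.mem_singleton_iff, Prod.mk.injEq] at h ⊢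
  omega

/-- A constant-sign m-loop (cyclic sequence of at least 6 distinct sites, consecutive sites
adjacent, next-but-one sites non-adjacent) is stable under one application of `T`. -/
theorem mloop_stable (σ : ℤ × ℤ → ℤ) (k : ℕ) (hk : 6 ≤ k)
    (ζ : ZMod k → ℤ × ℤ) (hinjζ : Function.Injective ζ)
    (hadj : ∀ i : ZMod k, triAdj (ζ i) (ζ (i + 1)))
    (hm : ∀ i : ZMod k, ¬ triAdj (ζ i) (ζ (i + 2)))
    (hconst : ∀ i : ZMod k, σ (ζ i) = σ (ζ 0)) :
    ∀ i : ZMod k, Tstep σ (ζ i) = σ (ζ i) := by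
  intro i
  have hne : ζ (i - 1) ≠ ζ (i + 1) := by
    intro h
    have h2 : (i - 1 : ZMod k) = i + 1 := hinjζ h
    have h3 : (2 : ZMod k) = 0 := by linear_combination -h2
    haveI : NeZero k := ⟨by omega⟩
    have hd := (ZMod.natCast_eq_zero_iff 2 k).mp (by exact_mod_cast h3)
    exact absurd (Nat.le_of_dvd two_pos hd) (by omega)
  have hadj1 : triAdj (ζ i) (ζ (i - 1)) := by
    have := hadj (i - 1); simpa using triAdj_symm (by simpa using this)
  have hnadj : ¬ triAdj (ζ (i - 1)) (ζ (i + 1)) := by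
    have h := hm (i - 1)
    have e : i - 1 + 2 = i + 1 := by ring
    rwa [e] at h
  rw [Tstep, if_pos]
  exact ⟨ζ (i - 1), ζ (i + 1), hne, hadj1, hadj i, hnadj,
    by rw [hconst (i - 1), hconst i], by rw [hconst (i + 1), hconst i]⟩
end

section
/- Under the cellular automaton T on the triangular lattice, if (ζ₀, …, ζ_k) is an m-path of constant spin sign and the endpoint spins σ_{ζ₀} and σ_{ζ_k} do not change under one application of T, then no spin σ_{ζ_i} along the m-path changes under that application of T. -/
open Classical

/-- If the endpoints of a constant-sign m-path do not flip under one application of `T`,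
then no spin along the m-path flips. -/
theorem mpath_stable_of_endpoints_stable (σ : ℤ × ℤ → ℤ) (k : ℕ) (ζ : ℕ → ℤ × ℤ)
    (hinj : ∀ i ≤ k, ∀ j ≤ k, ζ i = ζ j → i = j)
    (hadj : ∀ i < k, triAdj (ζ i) (ζ (i + 1)))
    (hm : ∀ i, 0 < i → i < k → ¬ triAdj (ζ (i - 1)) (ζ (i + 1)))
    (hconst : ∀ i ≤ k, σ (ζ i) = σ (ζ 0))
    (h0 : Tstep σ (ζ 0) = σ (ζ 0)) (hk : Tstep σ (ζ k) = σ (ζ k)) :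
    ∀ i ≤ k, Tstep σ (ζ i) = σ (ζ i) := by
  intro i hik
  rcases Nat.eq_zero_or_pos i with hz | hpos
  · subst hz; exact h0
  rcases eq_or_lt_of_le hik with heq | hlt
  · rw [heq]; exact hk
  have hsucc : i - 1 + 1 = i := Nat.succ_pred_eq_of_pos hpos
  have ha1 : triAdj (ζ i) (ζ (i - 1)) := by
    have := hadj (i - 1) (by omega)
    rw [hsucc] at this
    exact triAdj_symm this
  have hne : ζ (i - 1) ≠ ζ (i + 1) := by
    intro h
    have := hinj (i - 1) (by omega) (i + 1) (by omega) h
    omega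
  rw [Tstep, if_pos]
  exact ⟨ζ (i - 1), ζ (i + 1), hne, ha1, hadj i hlt, hm i hpos hlt,
    (hconst (i - 1) (by omega)).trans (hconst i hik).symm,
    (hconst (i + 1) (by omega)).trans (hconst i hik).symm⟩
end

section
/- Under the cellular automaton T on the triangular lattice 𝕋, clusters cannot merge: if at time n two sites x₁ and x₂ belong to distinct constant-sign clusters C₁ and C₂ of the same sign, each of which is surrounded by a stable m-loop of the opposite sign, and if σ_{x₁} and σ_{x₂} are unchanged at time n+1, then x₁ and x₂ belong to distinct clusters at time n+1. -/
open Classical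

lemma loop_stable {σ : ℤ × ℤ → ℤ} {c : ℤ} {k : ℕ} (hk : 6 ≤ k) (ζ : ZMod k → ℤ × ℤ)
    (hinj : Function.Injective ζ) (hc : ∀ j : ZMod k, σ (ζ j) = c)
    (hadj : ∀ i : ZMod k, triAdj (ζ i) (ζ (i + 1)))
    (hm : ∀ i : ZMod k, ¬ triAdj (ζ i) (ζ (i + 2)))
    (i : ZMod k) : Tstep σ (ζ i) = σ (ζ i) := by
  have hne : ζ (i - 1) ≠ ζ (i + 1) := by
    intro h
    have := hinj h
    have h2 : (2 : ZMod k) = 0 := by linear_combination -this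
    haveI : NeZero k := ⟨by omega⟩
    have hdvd : k ∣ 2 := (ZMod.natCast_eq_zero_iff 2 k).mp (by exact_mod_cast h2)
    exact absurd (Nat.le_of_dvd (by norm_num) hdvd) (by omega)
  have hA : triAdj (ζ i) (ζ (i - 1)) := by
    have := hadj (i - 1)
    rw [sub_add_cancel] at this
    exact triAdj_symm this
  have hB : triAdj (ζ i) (ζ (i + 1)) := hadj i
  have hC : ¬ triAdj (ζ (i - 1)) (ζ (i + 1)) := by
    have := hm (i - 1)
    have e : i - 1 + 2 = i + 1 := by ring
    rwa [e] at this
  rw [Tstep, if_pos]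
  exact ⟨ζ (i - 1), ζ (i + 1), hne, hA, hB, hC, (hc _).trans (hc i).symm, (hc _).trans (hc i).symm⟩

/-- Clusters cannot merge under `T`: if `x₁`, `x₂` lie in distinct same-sign clusters,
each surrounded by a (stable) constant-sign m-loop of the opposite sign with disjoint
interiors, and neither spin changes, then they lie in distinct clusters after the update. -/
theorem clusters_cannot_merge (σ : ℤ × ℤ → ℤ) (hpm : ∀ z, σ z = 1 ∨ σ z = -1)
    (x₁ x₂ : ℤ × ℤ) (hsign : σ x₁ = σ x₂) (hdistinct : ¬ sameCluster σ x₁ x₂)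
    (k₁ k₂ : ℕ) (hk₁ : 6 ≤ k₁) (hk₂ : 6 ≤ k₂)
    (ζ₁ : ZMod k₁ → ℤ × ℤ) (ζ₂ : ZMod k₂ → ℤ × ℤ)
    (hinj₁ : Function.Injective ζ₁) (hinj₂ : Function.Injective ζ₂)
    (hadj₁ : ∀ i : ZMod k₁, triAdj (ζ₁ i) (ζ₁ (i + 1)))
    (hadj₂ : ∀ i : ZMod k₂, triAdj (ζ₂ i) (ζ₂ (i + 1)))
    (hm₁ : ∀ i : ZMod k₁, ¬ triAdj (ζ₁ i) (ζ₁ (i + 2)))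
    (hm₂ : ∀ i : ZMod k₂, ¬ triAdj (ζ₂ i) (ζ₂ (i + 2)))
    (hopp₁ : ∀ i : ZMod k₁, σ (ζ₁ i) = -σ x₁)
    (hopp₂ : ∀ i : ZMod k₂, σ (ζ₂ i) = -σ x₂)
    (hsur₁ : {z | connIn (Set.range ζ₁)ᶜ x₁ z}.Finite)
    (hsur₂ : {z | connIn (Set.range ζ₂)ᶜ x₂ z}.Finite)
    (hdisj : Disjoint {z | connIn (Set.range ζ₁)ᶜ x₁ z}
      {z | connIn (Set.range ζ₂)ᶜ x₂ z})
    (h₁ : Tstep σ x₁ = σ x₁) (h₂ : Tstep σ x₂ = σ x₂) :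
    ¬ sameCluster (Tstep σ) x₁ x₂ := by
  intro hpath
  set s := σ x₁ with hs
  -- after the step, every loop site of ζ₁ has spin -s
  have hloop1 : ∀ i : ZMod k₁, Tstep σ (ζ₁ i) = -s := by
    intro i
    rw [loop_stable hk₁ ζ₁ hinj₁ hopp₁ hadj₁ hm₁ i, hopp₁ i]
  have hsne : s ≠ -s := by
    rcases hpm x₁ with h | h <;> rw [hs, h] <;> omega
  -- along the path the updated spin is constantly s, so it avoids the loop ζ₁
  have key : ∀ z, Relation.ReflTransGen
      (fun a b => triAdj a b ∧ Tstep σ a = Tstep σ b) x₁ z →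
      Tstep σ z = s ∧ connIn (Set.range ζ₁)ᶜ x₁ z := by
    intro z hz
    induction hz with
    | refl => exact ⟨by rw [h₁], Relation.ReflTransGen.refl⟩
    | tail hab hbc ih =>
      rename_i b c
      obtain ⟨hTb, hconn⟩ := ih
      have hTc : Tstep σ c = s := by rw [← hbc.2, hTb]
      refine ⟨hTc, Relation.ReflTransGen.tail hconn ⟨hbc.1, ?_, ?_⟩⟩
      · rintro ⟨i, rfl⟩
        exact hsne (hTb.symm.trans (hloop1 i))
      · rintro ⟨i, rfl⟩
        exact hsne (hTc.symm.trans (hloop1 i))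
  have hx2in1 : x₂ ∈ {z | connIn (Set.range ζ₁)ᶜ x₁ z} := (key x₂ hpath).2
  have hx2in2 : x₂ ∈ {z | connIn (Set.range ζ₂)ᶜ x₂ z} := Relation.ReflTransGen.refl
  exact Set.disjoint_left.mp hdisj hx2in1 hx2in2
end
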